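/- arXiv:1801.04803 — 3 statements merged into one kernel-verified Lean document; each statement's English description precedes it below -/
import Mathlib

section
/- Let q be a prime power and let v, d, k be integers with d even, 2 ≤ d/2 ≤ k ≤ v/2 and k < d. Let C be a (v,#C,d;k)_q constant dimension code that contains a (v,d;k)_q lifted MRD code as a subset. Then #C ≤ q^{(v−k)(k−d/2+1)} + A_q(v−k, 2(d−k); d/2). -/
open Module

/-- The subspace of `F_q^v` of vectors whose first `k` coordinates vanish
(denoted `Γ` in the paper); its complement (as a set of vectors) is `Δ`. -/
def Gamma (K : Type) [Field K] (k v : ℕ) : Submodule K (Fin v → K) where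
  carrier := {x | ∀ j : Fin v, (j : ℕ) < k → x j = 0}
  add_mem' := by
    intro a b ha hb j hj
    simp [ha j hj, hb j hj]
  zero_mem' := by
    intro j hj
    rfl
  smul_mem' := by
    intro c x hx j hj
    simp [hx j hj]

/-- The subspace distance `d_S(U,W) = dim(U+W) - dim(U ∩ W)`. -/
noncomputable def sDist {K : Type} [Field K] {v : ℕ}
    (U W : Submodule K (Fin v → K)) : ℕ :=
  finrank K ↥(U ⊔ W) - finrank K ↥(U ⊓ W)

/-- A constant dimension code of dimension `k` and minimum subspace distance `d`. -/
def IsCDC (K : Type) [Field K] (v : ℕ) (d k : ℤ)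
    (C : Set (Submodule K (Fin v → K))) : Prop :=
  (∀ U ∈ C, (finrank K U : ℤ) = k) ∧
  ∀ U ∈ C, ∀ W ∈ C, U ≠ W → d ≤ (sDist U W : ℤ)

/-- `A_q(v,d;k)`: the maximum cardinality of a `(v,M,d;k)_q` CDC. -/
noncomputable def Amax (K : Type) [Field K] (v : ℕ) (d k : ℤ) : ℕ :=
  sSup {n | ∃ C : Set (Submodule K (Fin v → K)), IsCDC K v d k C ∧ C.ncard = n}

/-- Row `i` of the `k × v` matrix `(I_k | A)`. -/
def liftRow {K : Type} [Field K] {k v : ℕ} (A : Matrix (Fin k) (Fin (v - k)) K)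
    (i : Fin k) : Fin v → K := fun j =>
  if (j : ℕ) < k then (if (i : ℕ) = (j : ℕ) then 1 else 0)
  else if h2 : (j : ℕ) - k < v - k then A i ⟨(j : ℕ) - k, h2⟩ else 0

/-- `M` is a `(v,d;k)_q` lifted MRD code: `M = { rowspan (I_k | A) : A ∈ R }`
for a `[k × (v-k), q^((v-k)(k-d/2+1)), d/2]_q` rank metric code `R`. -/
def IsLMRD (q : ℕ) (K : Type) [Field K] (v d k : ℕ)
    (M : Set (Submodule K (Fin v → K))) : Prop :=
  ∃ R : Set (Matrix (Fin k) (Fin (v - k)) K),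
    R.ncard = q ^ ((v - k) * (k - d / 2 + 1)) ∧
    (∀ A ∈ R, ∀ B ∈ R, A ≠ B → d / 2 ≤ (A - B).rank) ∧
    M = {U | ∃ A ∈ R, U = Submodule.span K (Set.range (liftRow A))}

/-- The Gaussian binomial coefficient `[a choose b]_q`, defined to be `0`
unless `0 ≤ b ≤ a`. -/
noncomputable def qBin (q : ℕ) (a b : ℤ) : ℚ :=
  if 0 ≤ b ∧ b ≤ a then
    ∏ i ∈ Finset.range b.toNat,
      ((q : ℚ) ^ a - (q : ℚ) ^ (i : ℤ)) / ((q : ℚ) ^ b - (q : ℚ) ^ (i : ℤ))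
  else 0

/-- `[[w, u; c]]_q = q^(u*c) * [w-u choose c]_q` for `0 ≤ c ≤ w-u`, else `0`. -/
noncomputable def qBinD (q : ℕ) (w u c : ℤ) : ℚ :=
  if 0 ≤ c ∧ c ≤ w - u then (q : ℚ) ^ (u * c) * qBin q (w - u) c else 0

/-!
Write `δ = d / 2` and `Γ` for the vectors vanishing on the first `k` coordinates. A codeword
`U ∉ M` meets `Γ` in dimension at least `δ`: otherwise its projection to the first `k`
coordinates contains `k - δ + 1` independent vectors `x i`, and since `A ↦ (x i ⬝ A)ᵢ` is injective
on an MRD code of minimum rank distance `δ`, counting shows that it is onto, so some lifted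
codeword `rowspan (I | A)` shares `k - δ + 1` independent vectors with `U`, too many for distance
`d`. The projection to the last `v - k` coordinates is injective on `Γ`, so shrinking the images of
the spaces `U ∩ Γ` to dimension `δ` gives `δ`-dimensional subspaces of `F_q^(v-k)` that pairwise
meet in dimension at most `dim (U ∩ U') ≤ k - δ < δ`: they are distinct and form a code of
subspace distance `2δ - 2(k - δ) = 2(d - k)`.
-/

open Matrix

section Subspaces

variable {K V W : Type} [Field K] [AddCommGroup V] [Module K V] [AddCommGroup W] [Module K W]

theorem Submodule.finrank_map_add_finrank_inf_ker [FiniteDimensional K V] (f : V →ₗ[K] W)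
    (p : Submodule K V) :
    finrank K (p.map f) + finrank K ↥(p ⊓ LinearMap.ker f) = finrank K p := by
  have h := LinearMap.finrank_range_add_finrank_ker (f.domRestrict p)
  have hker : (LinearMap.ker f).comap p.subtype = (p ⊓ LinearMap.ker f).comap p.subtype := by
    rw [Submodule.comap_inf, Submodule.comap_subtype_self, top_inf_eq]
  rwa [LinearMap.range_domRestrict, LinearMap.ker_domRestrict, hker,
    (Submodule.comapSubtypeEquivOfLe inf_le_left).finrank_eq] at h

theorem Submodule.finrank_map_of_disjoint_ker [FiniteDimensional K V] {f : V →ₗ[K] W}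
    {p : Submodule K V} (h : Disjoint p (LinearMap.ker f)) : finrank K (p.map f) = finrank K p := by
  have := p.finrank_map_add_finrank_inf_ker f
  rwa [h.eq_bot, finrank_bot, add_zero] at this

theorem Submodule.map_inf_of_disjoint_ker {f : V →ₗ[K] W} {p q : Submodule K V}
    (h : Disjoint (p ⊔ q) (LinearMap.ker f)) : (p ⊓ q).map f = p.map f ⊓ q.map f := by
  apply SetLike.coe_injective
  simp only [Submodule.map_coe, Submodule.coe_inf]
  exact (LinearMap.injOn_of_disjoint_ker le_rfl h).image_inter
    (SetLike.coe_subset_coe.mpr le_sup_left) (SetLike.coe_subset_coe.mpr le_sup_right)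

theorem Submodule.exists_le_finrank_eq {p : Submodule K V} {m : ℕ} (hm : m ≤ finrank K p) :
    ∃ X ≤ p, finrank K X = m := by
  obtain ⟨f, hf⟩ := exists_linearIndependent_of_le_finrank hm
  refine ⟨Submodule.span K (Set.range (p.subtype ∘ f)), ?_, ?_⟩
  · rw [Submodule.span_le]
    rintro _ ⟨i, rfl⟩
    exact (f i).2
  · rw [finrank_span_eq_card (hf.map' p.subtype p.ker_subtype), Fintype.card_fin]

theorem Submodule.exists_linearIndependent_comp_of_le_finrank_map {f : V →ₗ[K] W}
    {p : Submodule K V} {m : ℕ} (hm : m ≤ finrank K (p.map f)) :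
    ∃ u : Fin m → V, (∀ i, u i ∈ p) ∧ LinearIndependent K (f ∘ u) := by
  obtain ⟨x, hx⟩ := exists_linearIndependent_of_le_finrank hm
  choose u hu hux using fun i => Submodule.mem_map.mp (x i).2
  refine ⟨u, hu, ?_⟩
  rw [show f ∘ u = (p.map f).subtype ∘ x from funext hux]
  exact hx.map' _ (Submodule.ker_subtype _)

end Subspaces

section RankMetric

variable {K : Type} [Field K] {k n s : ℕ}

theorem Matrix.rank_add_le_of_vecMul_eq_zero {x : Fin s → Fin k → K} (hx : LinearIndependent K x)
    {B : Matrix (Fin k) (Fin n) K} (hB : ∀ i, x i ᵥ* B = 0) : B.rank + s ≤ k := by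
  have hspan : Submodule.span K (Set.range x) ≤ LinearMap.ker B.vecMulLinear := by
    rw [Submodule.span_le]
    rintro _ ⟨i, rfl⟩
    exact hB i
  have hker := Submodule.finrank_mono hspan
  rw [finrank_span_eq_card hx, Fintype.card_fin] at hker
  have hrank : B.rank = finrank K (LinearMap.range B.vecMulLinear) := by
    rw [← B.rank_transpose, Matrix.rank, Matrix.mulVecLin_transpose]
  have := LinearMap.finrank_range_add_finrank_ker B.vecMulLinear
  rw [Module.finrank_fin_fun] at this
  omega

theorem exists_mem_forall_vecMul_eq [Fintype K] {R : Set (Matrix (Fin k) (Fin n) K)}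
    (hcard : R.ncard = Fintype.card K ^ (n * s))
    (hR : ∀ A ∈ R, ∀ B ∈ R, A ≠ B → k < (A - B).rank + s)
    {x : Fin s → Fin k → K} (hx : LinearIndependent K x) (y : Fin s → Fin n → K) :
    ∃ A ∈ R, ∀ i, x i ᵥ* A = y i := by
  set ev : Matrix (Fin k) (Fin n) K → Fin s → Fin n → K := fun A i => x i ᵥ* A
  have hinj : Set.InjOn ev R := by
    intro A hA B hB hAB
    by_contra hne
    have := Matrix.rank_add_le_of_vecMul_eq_zero hx (B := A - B) fun i => by
      rw [Matrix.vecMul_sub, sub_eq_zero]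
      exact congrFun hAB i
    exact absurd (hR A hA B hB hne) (not_lt.mpr this)
  have himage : ev '' R = Set.univ := by
    apply Set.eq_of_subset_of_ncard_le (Set.subset_univ _)
    rw [hinj.ncard_image, hcard, Set.ncard_univ, Nat.card_eq_fintype_card]
    simp [pow_mul]
  obtain ⟨A, hA, hAy⟩ := himage.symm ▸ Set.mem_univ y
  exact ⟨A, hA, congrFun hAy⟩

end RankMetric

section SubspaceCodes

variable {K : Type} [Field K] {n : ℕ}

theorem sDist_eq (U W : Submodule K (Fin n → K)) :
    (sDist U W : ℤ) = finrank K U + finrank K W - 2 * finrank K ↥(U ⊓ W) := by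
  have hsum := Submodule.finrank_sup_add_finrank_inf_eq U W
  have hle : finrank K ↥(U ⊓ W) ≤ finrank K ↥(U ⊔ W) :=
    Submodule.finrank_mono (inf_le_left.trans le_sup_left)
  rw [sDist, Nat.cast_sub hle]
  omega

theorem IsCDC.two_mul_finrank_inf_add_le {d k : ℤ} {C : Set (Submodule K (Fin n → K))}
    (hC : IsCDC K n d k C) {U W : Submodule K (Fin n → K)} (hU : U ∈ C) (hW : W ∈ C)
    (hne : U ≠ W) : 2 * (finrank K ↥(U ⊓ W) : ℤ) + d ≤ 2 * k := by
  have := hC.2 U hU W hW hne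
  rw [sDist_eq, hC.1 U hU, hC.1 W hW] at this
  omega

theorem IsCDC.ncard_le_Amax [Finite K] {d k : ℤ} {C : Set (Submodule K (Fin n → K))}
    (hC : IsCDC K n d k C) : C.ncard ≤ Amax K n d k :=
  le_csSup ⟨Nat.card (Submodule K (Fin n → K)), fun _ ⟨C', _, hC'⟩ => hC' ▸ Set.ncard_le_card C'⟩
    ⟨C, hC, rfl⟩

theorem ncard_le_Amax_of_two_mul_finrank_inf_le [Finite K] {ι : Type} {S : Set ι}
    (Y : ι → Submodule K (Fin n → K)) {d : ℤ} {δ : ℕ} (hd : 0 < d)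
    (hY : ∀ i ∈ S, δ ≤ finrank K (Y i))
    (hYY : ∀ i ∈ S, ∀ j ∈ S, i ≠ j → d + 2 * (finrank K ↥(Y i ⊓ Y j) : ℤ) ≤ 2 * δ) :
    S.ncard ≤ Amax K n d δ := by
  choose! X hXY hX using fun i (hi : i ∈ S) => Submodule.exists_le_finrank_eq (hY i hi)
  have hXX : ∀ i ∈ S, ∀ j ∈ S, i ≠ j → d + 2 * (finrank K ↥(X i ⊓ X j) : ℤ) ≤ 2 * δ := by
    intro i hi j hj hij
    have := Submodule.finrank_mono (inf_le_inf (hXY i hi) (hXY j hj))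
    have := hYY i hi j hj hij
    omega
  have hinj : Set.InjOn X S := by
    intro i hi j hj hXij
    by_contra hij
    have := hXX i hi j hj hij
    rw [hXij, inf_idem, hX j hj] at this
    omega
  have hcode : IsCDC K n d δ (X '' S) := by
    refine ⟨?_, ?_⟩
    · rintro _ ⟨i, hi, rfl⟩
      rw [hX i hi]
    · rintro _ ⟨i, hi, rfl⟩ _ ⟨j, hj, rfl⟩ hne
      have := hXX i hi j hj (fun h => hne (h ▸ rfl))
      rw [sDist_eq, hX i hi, hX j hj]
      omega
  rw [← hinj.ncard_image]
  exact hcode.ncard_le_Amax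

end SubspaceCodes

section Lift

variable (K : Type) [Field K] {k v : ℕ}

def headMap (h : k ≤ v) : (Fin v → K) →ₗ[K] (Fin k → K) :=
  LinearMap.funLeft K K (Fin.castLE h)

def tailMap (h : k ≤ v) : (Fin v → K) →ₗ[K] (Fin (v - k) → K) :=
  LinearMap.funLeft K K fun j => ⟨k + j, by omega⟩

variable {K}

theorem ext_headMap_tailMap (h : k ≤ v) {y z : Fin v → K}
    (hhead : headMap K h y = headMap K h z) (htail : tailMap K h y = tailMap K h z) :
    y = z := by
  funext j
  by_cases hj : (j : ℕ) < k
  · exact congrFun hhead ⟨j, hj⟩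
  · have := congrFun htail ⟨j - k, by omega⟩
    simp only [tailMap, LinearMap.funLeft_apply] at this
    rwa [show (⟨k + (j - k), _⟩ : Fin v) = j from Fin.ext (by simp; omega)] at this

theorem Gamma_eq_ker_headMap (h : k ≤ v) : Gamma K k v = LinearMap.ker (headMap K h) := by
  ext y
  refine ⟨fun hy => funext fun i => hy _ i.isLt, fun hy j hj => congrFun hy ⟨j, hj⟩⟩

theorem disjoint_Gamma_ker_tailMap (h : k ≤ v) :
    Disjoint (Gamma K k v) (LinearMap.ker (tailMap K h)) := by
  rw [Submodule.disjoint_def, Gamma_eq_ker_headMap h]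
  intro y hhead htail
  exact ext_headMap_tailMap h (hhead.trans (map_zero _).symm) (htail.trans (map_zero _).symm)

theorem headMap_liftRow (h : k ≤ v) (A : Matrix (Fin k) (Fin (v - k)) K) (i : Fin k) :
    headMap K h (liftRow A i) = Pi.single i 1 := by
  funext j
  simp [headMap, liftRow, Pi.single_apply, Fin.ext_iff, eq_comm]

theorem tailMap_liftRow (h : k ≤ v) (A : Matrix (Fin k) (Fin (v - k)) K) (i : Fin k) :
    tailMap K h (liftRow A i) = A i := by
  funext j
  simp [tailMap, liftRow]

theorem mem_span_liftRow_iff (h : k ≤ v) (A : Matrix (Fin k) (Fin (v - k)) K) {y : Fin v → K} :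
    y ∈ Submodule.span K (Set.range (liftRow A)) ↔ tailMap K h y = headMap K h y ᵥ* A := by
  constructor
  · intro hy
    induction hy using Submodule.span_induction with
    | mem _ hx =>
      obtain ⟨i, rfl⟩ := hx
      rw [tailMap_liftRow, headMap_liftRow, single_one_vecMul]
      rfl
    | zero => simp
    | add _ _ _ _ hx hy => simp [hx, hy, add_vecMul]
    | smul _ _ _ hx => simp [hx, smul_vecMul]
  · intro hy
    have hsum : y = ∑ i, headMap K h y i • liftRow A i := by
      refine ext_headMap_tailMap h ?_ ?_
      · ext j
        simp [map_sum, headMap_liftRow, Pi.single_apply]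
      · simp [map_sum, tailMap_liftRow, hy, vecMul_eq_sum]
    rw [hsum]
    exact Submodule.sum_mem _ fun i _ => Submodule.smul_mem _ _ (Submodule.subset_span ⟨i, rfl⟩)

theorem span_liftRow_injective (h : k ≤ v) :
    Function.Injective fun A : Matrix (Fin k) (Fin (v - k)) K =>
      Submodule.span K (Set.range (liftRow A)) := by
  intro A B (hAB : Submodule.span K _ = Submodule.span K _)
  ext i j
  have hrow : liftRow A i ∈ Submodule.span K (Set.range (liftRow B)) :=
    hAB ▸ Submodule.subset_span ⟨i, rfl⟩
  rw [mem_span_liftRow_iff h, tailMap_liftRow, headMap_liftRow, single_one_vecMul] at hrow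
  exact congrFun hrow j

end Lift

section LiftedCodes

variable {K : Type} [Field K] {k v : ℕ}

theorem finrank_map_tailMap_inf_Gamma (h : k ≤ v) (U : Submodule K (Fin v → K)) :
    finrank K ((U ⊓ Gamma K k v).map (tailMap K h)) = finrank K ↥(U ⊓ Gamma K k v) :=
  Submodule.finrank_map_of_disjoint_ker ((disjoint_Gamma_ker_tailMap h).mono_left inf_le_right)

theorem finrank_map_tailMap_inf_Gamma_inf_le (h : k ≤ v) (U U' : Submodule K (Fin v → K)) :
    finrank K ↥((U ⊓ Gamma K k v).map (tailMap K h) ⊓ (U' ⊓ Gamma K k v).map (tailMap K h)) ≤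
      finrank K ↥(U ⊓ U') := by
  rw [← Submodule.map_inf_of_disjoint_ker
      ((disjoint_Gamma_ker_tailMap h).mono_left (sup_le inf_le_right inf_le_right)),
    Submodule.finrank_map_of_disjoint_ker
      ((disjoint_Gamma_ker_tailMap h).mono_left (inf_le_left.trans inf_le_right))]
  exact Submodule.finrank_mono (inf_le_inf inf_le_left inf_le_left)

theorem le_finrank_inf_Gamma [Fintype K] (h : k ≤ v) {R : Set (Matrix (Fin k) (Fin (v - k)) K)}
    {δ : ℕ} (hδ : δ ≤ k) (hcard : R.ncard = Fintype.card K ^ ((v - k) * (k - δ + 1)))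
    (hR : ∀ A ∈ R, ∀ B ∈ R, A ≠ B → δ ≤ (A - B).rank)
    {U : Submodule K (Fin v → K)} (hU : finrank K U = k)
    (hUR : ∀ A ∈ R, finrank K ↥(U ⊓ Submodule.span K (Set.range (liftRow A))) + δ ≤ k) :
    δ ≤ finrank K ↥(U ⊓ Gamma K k v) := by
  by_contra! hlt
  have hhead : k - δ + 1 ≤ finrank K (U.map (headMap K h)) := by
    have := U.finrank_map_add_finrank_inf_ker (headMap K h)
    rw [← Gamma_eq_ker_headMap h] at this
    omega
  obtain ⟨u, huU, hu⟩ := Submodule.exists_linearIndependent_comp_of_le_finrank_map hhead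
  obtain ⟨A, hA, hAu⟩ := exists_mem_forall_vecMul_eq hcard
    (fun A hA B hB hne => by have := hR A hA B hB hne; omega) hu (tailMap K h ∘ u)
  have hspan :
      Submodule.span K (Set.range u) ≤ U ⊓ Submodule.span K (Set.range (liftRow A)) := by
    rw [Submodule.span_le]
    rintro _ ⟨i, rfl⟩
    exact ⟨huU i, (mem_span_liftRow_iff h A).mpr (hAu i).symm⟩
  have hinter := Submodule.finrank_mono hspan
  rw [finrank_span_eq_card (LinearIndependent.of_comp _ hu), Fintype.card_fin] at hinter
  have := hUR A hA
  omega

end LiftedCodes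

theorem stmt5_general (q : ℕ) (K : Type) [Field K] [Fintype K] (hq : Fintype.card K = q)
    (v d k : ℕ) (hd : Even d) (hdk : d / 2 ≤ k) (hkv : 2 * k ≤ v)
    (hkd : k < d)
    (C M : Set (Submodule K (Fin v → K)))
    (hC : IsCDC K v (d : ℤ) (k : ℤ) C) (hM : IsLMRD q K v d k M) (hMC : M ⊆ C) :
    C.ncard ≤ q ^ ((v - k) * (k - d / 2 + 1))
      + Amax K (v - k) (2 * ((d : ℤ) - (k : ℤ))) ((d / 2 : ℕ) : ℤ) := by
  obtain ⟨R, hRcard, hRrank, hM⟩ := hM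
  have h : k ≤ v := by omega
  have hd_eq : d = 2 * (d / 2) := (Nat.two_mul_div_two_of_even hd).symm
  replace hM : M = (fun A => Submodule.span K (Set.range (liftRow A))) '' R := by
    rw [hM]
    ext U
    simp only [Set.mem_ofPred_eq, Set.mem_image, eq_comm (a := U)]
  have hMcard : M.ncard = q ^ ((v - k) * (k - d / 2 + 1)) := by
    rw [hM, Set.ncard_image_of_injective R (span_liftRow_injective h), hRcard]
  have hGamma : ∀ U ∈ C \ M, d / 2 ≤ finrank K ↥(U ⊓ Gamma K k v) := by
    intro U ⟨hUC, hUM⟩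
    refine le_finrank_inf_Gamma h hdk (hq ▸ hRcard) hRrank (by exact_mod_cast hC.1 U hUC) ?_
    intro A hA
    have hAM : Submodule.span K (Set.range (liftRow A)) ∈ M := hM ▸ ⟨A, hA, rfl⟩
    have := hC.two_mul_finrank_inf_add_le hUC (hMC hAM) (fun hU => hUM (hU ▸ hAM))
    omega
  have hrest : (C \ M).ncard ≤ Amax K (v - k) (2 * ((d : ℤ) - (k : ℤ))) ((d / 2 : ℕ) : ℤ) := by
    refine ncard_le_Amax_of_two_mul_finrank_inf_le (fun U => (U ⊓ Gamma K k v).map (tailMap K h))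
      (by omega) (fun U hU => ?_) (fun U hU U' hU' hne => ?_)
    · rw [finrank_map_tailMap_inf_Gamma]
      exact hGamma U hU
    · have := finrank_map_tailMap_inf_Gamma_inf_le h U U'
      have := hC.two_mul_finrank_inf_add_le hU.1 hU'.1 hne
      omega
  have := Set.ncard_sdiff_add_ncard_of_subset hMC
  omega

/-- for `k < d`, a CDC containing an LMRD has cardinality at most
`q^((v-k)(k-d/2+1)) + A_q(v-k, 2(d-k); d/2)`. -/
theorem stmt5 (q : ℕ) (K : Type) [Field K] [Fintype K] (hq : Fintype.card K = q)
    (v d k : ℕ) (hd : Even d) (hd2 : 2 ≤ d / 2) (hdk : d / 2 ≤ k) (hkv : 2 * k ≤ v)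
    (hkd : k < d)
    (C M : Set (Submodule K (Fin v → K)))
    (hC : IsCDC K v (d : ℤ) (k : ℤ) C) (hM : IsLMRD q K v d k M) (hMC : M ⊆ C) :
    C.ncard ≤ q ^ ((v - k) * (k - d / 2 + 1))
      + Amax K (v - k) (2 * ((d : ℤ) - (k : ℤ))) ((d / 2 : ℕ) : ℤ) :=
  stmt5_general q K hq v d k hd hdk hkv hkd C M hC hM hMC
end

section
/- Let q be a prime power and let c, d, k, v, y1, y2 be integers with d even, 2 ≤ d/2 ≤ k ≤ v/2, 0 ≤ c ≤ k − d/2 − 1, 0 ≤ y1 ≤ d/2, 0 ≤ y2 ≤ d/2, 2 ≤ v − k, and either y2 = y1 or y2 = y1 − 1 ≥ 0. Then ([v−k choose y1]_q · [k choose c]_q / ([k−d/2 choose c]_q · [d/2 choose y1]_q)) · q^{c(v−k−d/2)} ≤ ([v−k choose y2]_q · [k choose c+1]_q / ([k−d/2 choose c+1]_q · [d/2 choose y2]_q)) · q^{(c+1)(v−k−d/2)}. -/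
open Module

/-! Split the summand as `g(y) * f(c)` with `g(y) = [v-k choose y]_q / [d/2 choose y]_q` and
`f(c) = [k choose c]_q / [k-d/2 choose c]_q * q^(c(v-k-d/2))`. The recursion
`[a choose b+1]_q = [a choose b]_q (q^a - q^b) / (q^b (q^(b+1) - 1))` shows that `c ↦ c + 1`
multiplies `f` by `(q^k - q^c) / (q^(k-d/2) - q^c) * q^(v-k-d/2) ≥ q^(v-k)`, while `y ↦ y + 1`
multiplies `g` by `(q^(v-k) - q^y) / (q^(d/2) - q^y) ≤ q^(v-k)`, as `q^(d/2) - q^y ≥ 1`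
for `q ≥ 2`. -/

open Finset

lemma prod_range_succ_zpow_sub {K : Type*} [Field K] {x : K} (hx : x ≠ 0) (n : ℕ) :
    ∏ i ∈ range (n + 1), (x ^ ((n : ℤ) + 1) - x ^ (i : ℤ))
      = (∏ i ∈ range n, (x ^ (n : ℤ) - x ^ (i : ℤ)))
        * (x ^ n * (x ^ ((n : ℤ) + 1) - 1)) := by
  have hshift : ∀ i ∈ range n, x ^ ((n : ℤ) + 1) - x ^ ((i + 1 : ℕ) : ℤ)
      = x * (x ^ (n : ℤ) - x ^ (i : ℤ)) := by
    intro i _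
    push_cast
    rw [zpow_add_one₀ hx, zpow_add_one₀ hx]
    ring
  rw [prod_range_succ', prod_congr rfl hshift, prod_mul_distrib, prod_const, card_range]
  simp only [Nat.cast_zero, zpow_zero]
  ring

lemma qBin_succ {q : ℕ} (hq : q ≠ 0) {a b : ℤ} (hb : 0 ≤ b) (hba : b + 1 ≤ a) :
    qBin q a (b + 1)
      = qBin q a b
        * (((q : ℚ) ^ a - (q : ℚ) ^ b) / ((q : ℚ) ^ b * ((q : ℚ) ^ (b + 1) - 1))) := by
  lift b to ℕ using hb
  rw [qBin, qBin, if_pos ⟨by omega, hba⟩, if_pos ⟨by omega, by omega⟩,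
    prod_div_distrib, prod_div_distrib, ← mul_div_mul_comm]
  have hsucc : ((b : ℤ) + 1).toNat = b + 1 := by omega
  rw [hsucc, prod_range_succ, prod_range_succ_zpow_sub (Nat.cast_ne_zero.mpr hq), zpow_natCast,
    Int.toNat_natCast]

lemma qBin_pos {q : ℕ} (hq : 1 < q) {a b : ℤ} (hb : 0 ≤ b) (hba : b ≤ a) :
    0 < qBin q a b := by
  have hq' : (1 : ℚ) < q := by exact_mod_cast hq
  rw [qBin, if_pos ⟨hb, hba⟩]
  refine prod_pos fun i hi => div_pos ?_ ?_ <;> rw [sub_pos] <;>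
    exact zpow_lt_zpow_right₀ hq' (by rw [mem_range] at hi; omega)

lemma qBin_nonneg {q : ℕ} (hq : 1 < q) (a b : ℤ) : 0 ≤ qBin q a b := by
  by_cases h : 0 ≤ b ∧ b ≤ a
  · exact (qBin_pos hq h.1 h.2).le
  · rw [qBin, if_neg h]

lemma qBin_div_qBin_nonneg {q : ℕ} (hq : 1 < q) (a a' b : ℤ) : 0 ≤ qBin q a b / qBin q a' b :=
  div_nonneg (qBin_nonneg hq a b) (qBin_nonneg hq a' b)

lemma qBin_succ_div_qBin_succ {q : ℕ} (hq : 1 < q) {a a' b : ℤ} (hb : 0 ≤ b)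
    (ha : b + 1 ≤ a) (ha' : b + 1 ≤ a') :
    qBin q a (b + 1) / qBin q a' (b + 1)
      = qBin q a b / qBin q a' b
        * (((q : ℚ) ^ a - (q : ℚ) ^ b) / ((q : ℚ) ^ a' - (q : ℚ) ^ b)) := by
  have hq' : (1 : ℚ) < q := by exact_mod_cast hq
  have hden : (q : ℚ) ^ b * ((q : ℚ) ^ (b + 1) - 1) ≠ 0 := by
    have : (1 : ℚ) < (q : ℚ) ^ (b + 1) := one_lt_zpow₀ hq' (by omega)
    positivity
  rw [qBin_succ (by omega : q ≠ 0) hb ha, qBin_succ (by omega : q ≠ 0) hb ha', mul_div_mul_comm,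
    div_div_div_cancel_right₀ hden]

section OrderedField

variable {K : Type*} [Field K] [LinearOrder K] [IsStrictOrderedRing K]

lemma zpow_sub_le_zpow_sub_div_zpow_sub {x : K} (hx : 1 < x) {a a' b : ℤ} (hba' : b < a')
    (ha' : a' ≤ a) :
    x ^ (a - a') ≤ (x ^ a - x ^ b) / (x ^ a' - x ^ b) := by
  have hx0 : x ≠ 0 := by positivity
  rw [le_div_iff₀ (sub_pos.mpr (zpow_lt_zpow_right₀ hx hba')), mul_sub, ← zpow_add₀ hx0,
    ← zpow_add₀ hx0, sub_add_cancel]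
  gcongr
  · exact hx.le
  · omega

lemma zpow_sub_div_zpow_sub_le {x : K} (hx : 2 ≤ x) {a a' b : ℤ} (hb : 0 ≤ b)
    (hba' : b < a') :
    (x ^ a - x ^ b) / (x ^ a' - x ^ b) ≤ x ^ a := by
  have hx0 : x ≠ 0 := by positivity
  have hxb : 1 ≤ x ^ b := one_le_zpow₀ (by linarith) hb
  have hgap : 1 ≤ x ^ a' - x ^ b := by
    have : x ^ (b + 1) ≤ x ^ a' := zpow_le_zpow_right₀ (by linarith) (by omega)
    rw [zpow_add_one₀ hx0] at this
    nlinarith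
  refine div_le_of_le_mul₀ (by linarith) (by positivity) ?_
  nlinarith [zpow_pos (show 0 < x by positivity) a]

end OrderedField

lemma zpow_sub_mul_qBin_div_qBin_le {q : ℕ} (hq : 1 < q) {a a' b : ℤ} (hb : 0 ≤ b)
    (hba' : b + 1 ≤ a') (ha' : a' ≤ a) :
    (q : ℚ) ^ (a - a') * (qBin q a b / qBin q a' b) ≤ qBin q a (b + 1) / qBin q a' (b + 1) := by
  rw [qBin_succ_div_qBin_succ hq hb (by omega) hba', mul_comm]
  exact mul_le_mul_of_nonneg_left
    (zpow_sub_le_zpow_sub_div_zpow_sub (by exact_mod_cast hq) (by omega) ha')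
    (qBin_div_qBin_nonneg hq _ _ _)

lemma qBin_succ_div_qBin_succ_le {q : ℕ} (hq : 1 < q) {a a' b : ℤ} (hb : 0 ≤ b)
    (hba : b + 1 ≤ a) (hba' : b + 1 ≤ a') :
    qBin q a (b + 1) / qBin q a' (b + 1) ≤ (q : ℚ) ^ a * (qBin q a b / qBin q a' b) := by
  rw [qBin_succ_div_qBin_succ hq hb hba hba', mul_comm]
  refine mul_le_mul_of_nonneg_right (zpow_sub_div_zpow_sub_le ?_ hb ?_)
    (qBin_div_qBin_nonneg hq _ _ _)
  · exact_mod_cast hq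
  · omega

theorem stmt16_general (q : ℕ) (hq : IsPrimePow q) (c d k v y1 y2 : ℤ)
    (hkv : 2 * k ≤ v) (hc0 : 0 ≤ c) (hc1 : c ≤ k - d / 2 - 1)
    (hy1a : 0 ≤ y1) (hy1b : y1 ≤ d / 2) (hyy : y2 = y1 ∨ (y2 = y1 - 1 ∧ 0 ≤ y2)) :
    qBin q (v - k) y1 * qBin q k c / (qBin q (k - d / 2) c * qBin q (d / 2) y1)
        * (q : ℚ) ^ (c * (v - k - d / 2))
      ≤ qBin q (v - k) y2 * qBin q k (c + 1)
          / (qBin q (k - d / 2) (c + 1) * qBin q (d / 2) y2)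
          * (q : ℚ) ^ ((c + 1) * (v - k - d / 2)) := by
  have hq1 : 1 < q := hq.one_lt
  set m := d / 2
  set s := v - k - m
  have hexp : (q : ℚ) ^ (v - k) * (q : ℚ) ^ (c * s)
      = (q : ℚ) ^ (k - (k - m)) * (q : ℚ) ^ ((c + 1) * s) := by
    have hq0 : (q : ℚ) ≠ 0 := by positivity
    rw [← zpow_add₀ hq0, ← zpow_add₀ hq0, show s = v - k - m from rfl]
    ring_nf
  have hratio_y : qBin q (v - k) y1 / qBin q m y1
      ≤ (q : ℚ) ^ (v - k) * (qBin q (v - k) y2 / qBin q m y2) := by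
    rcases hyy with rfl | ⟨rfl, hy2⟩
    · exact le_mul_of_one_le_left (qBin_div_qBin_nonneg hq1 _ _ _)
        (one_le_zpow₀ (by exact_mod_cast hq1.le) (by omega))
    · simpa using qBin_succ_div_qBin_succ_le hq1 hy2 (by omega) (by omega)
  calc _ = qBin q (v - k) y1 / qBin q m y1 * (qBin q k c / qBin q (k - m) c)
          * (q : ℚ) ^ (c * s) := by ring
    _ ≤ (q : ℚ) ^ (v - k) * (qBin q (v - k) y2 / qBin q m y2)
          * (qBin q k c / qBin q (k - m) c) * (q : ℚ) ^ (c * s) := by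
        gcongr
        exact qBin_div_qBin_nonneg hq1 _ _ _
    _ = qBin q (v - k) y2 / qBin q m y2
          * ((q : ℚ) ^ (k - (k - m)) * (qBin q k c / qBin q (k - m) c))
          * (q : ℚ) ^ ((c + 1) * s) := by
        linear_combination
          (qBin q (v - k) y2 / qBin q m y2 * (qBin q k c / qBin q (k - m) c)) * hexp
    _ ≤ qBin q (v - k) y2 / qBin q m y2
          * (qBin q k (c + 1) / qBin q (k - m) (c + 1)) * (q : ℚ) ^ ((c + 1) * s) := by
        gcongr
        · exact qBin_div_qBin_nonneg hq1 _ _ _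
        · exact zpow_sub_mul_qBin_div_qBin_le hq1 hc0 (by omega) (by omega)
    _ = _ := by ring

/-- the second summand of Proposition 2 is monotonically
increasing in `c`. -/
theorem stmt16 (q : ℕ) (hq : IsPrimePow q) (c d k v y1 y2 : ℤ)
    (hd : Even d) (hd2 : 2 ≤ d / 2) (hdk : d / 2 ≤ k) (hkv : 2 * k ≤ v)
    (hc0 : 0 ≤ c) (hc1 : c ≤ k - d / 2 - 1)
    (hy1a : 0 ≤ y1) (hy1b : y1 ≤ d / 2) (hy2a : 0 ≤ y2) (hy2b : y2 ≤ d / 2)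
    (hvk : 2 ≤ v - k) (hyy : y2 = y1 ∨ (y2 = y1 - 1 ∧ 0 ≤ y2)) :
    qBin q (v - k) y1 * qBin q k c / (qBin q (k - d / 2) c * qBin q (d / 2) y1)
        * (q : ℚ) ^ (c * (v - k - d / 2))
      ≤ qBin q (v - k) y2 * qBin q k (c + 1)
          / (qBin q (k - d / 2) (c + 1) * qBin q (d / 2) y2)
          * (q : ℚ) ^ ((c + 1) * (v - k - d / 2)) :=
  stmt16_general q hq c d k v y1 y2 hkv hc0 hc1 hy1a hy1b hyy
end

section
/- For every integer l ≥ 1 and every prime power q, there exists a (6l, q^{3l(l+1)} + q^{2l} + q^l + 1, 4l; 3l)_q constant dimension code that contains a (6l, 4l; 3l)_q lifted MRD code as a subset. -/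
open Module

open Polynomial





/-- Existence of a finite extension of prescribed degree over a finite field. -/
lemma exists_finite_ext (K : Type) [Field K] [Fintype K] (n : ℕ) (hn : n ≠ 0) :
    ∃ (L : Type) (_ : Field L) (_ : Algebra K L) (_ : Fintype L),
      Module.finrank K L = n := by
  classical
  obtain ⟨p, hp⟩ := CharP.exists K
  obtain ⟨m, hpm, hcard⟩ := FiniteField.card K p
  haveI : Fact p.Prime := ⟨hpm⟩
  set Ω := AlgebraicClosure K
  haveI : CharP Ω p := charP_of_injective_algebraMap (algebraMap K Ω).injective p
  set N : ℕ := Fintype.card K ^ n with hN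
  have hNp : N = p ^ (m * n) := by rw [hN, hcard, ← pow_mul]
  -- the subfield of Ω of elements fixed by x ↦ x^N
  let E : Subfield Ω :=
    { carrier := {x | x ^ N = x}
      one_mem' := by simp
      mul_mem' := by
        intro a b ha hb
        simp only [Set.mem_setOf_eq] at *
        rw [mul_pow, ha, hb]
      zero_mem' := by
        simp only [Set.mem_setOf_eq]
        exact zero_pow (by positivity)
      add_mem' := by
        intro a b ha hb
        simp only [Set.mem_setOf_eq] at *
        rw [hNp] at *
        rw [add_pow_char_pow, ha, hb]
      neg_mem' := by
        intro a ha
        simp only [Set.mem_setOf_eq] at *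
        rw [hNp] at *
        rw [neg_pow, neg_one_pow_char_pow, ha, neg_one_mul]
      inv_mem' := by
        intro a ha
        simp only [Set.mem_setOf_eq] at *
        rw [inv_pow, ha] }
  have hmem : ∀ x : Ω, x ∈ E ↔ x ^ N = x := fun x => Iff.rfl
  -- E is the root set of X^N - X
  have hq1 : 1 < Fintype.card K := Fintype.one_lt_card
  have hf0 : (X ^ N - X : K[X]) ≠ 0 := by
    rw [hN]; exact FiniteField.X_pow_card_pow_sub_X_ne_zero _ hn hq1
  have hroot : (E : Set Ω) = (X ^ N - X : K[X]).rootSet Ω := by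
    ext x
    rw [mem_rootSet_of_ne hf0]
    simp only [SetLike.mem_coe, hmem, map_sub, map_pow, aeval_X, sub_eq_zero]
  have hsep : (X ^ N - X : K[X]).Separable := by
    apply galois_poly_separable p N
    rw [hNp]
    exact dvd_pow_self p (by positivity)
  have hcardroot : Fintype.card ((X ^ N - X : K[X]).rootSet Ω) = N := by
    rw [card_rootSet_eq_natDegree hsep (IsAlgClosed.splits _), hN]
    exact FiniteField.X_pow_card_pow_sub_X_natDegree_eq _ hn hq1
  haveI : Fintype E := Fintype.ofEquiv _ (Equiv.setCongr hroot.symm)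
  have hcardE : Fintype.card E = N := by
    rw [← hcardroot]
    exact Fintype.card_congr (Equiv.setCongr hroot)
  -- algebra structure
  have halg : ∀ x : K, (algebraMap K Ω x) ∈ E := by
    intro x
    rw [hmem, ← map_pow, hN, FiniteField.pow_card_pow]
  letI : Algebra K E := RingHom.toAlgebra ((algebraMap K Ω).codRestrict E.toSubring halg)
  refine ⟨E, inferInstance, inferInstance, inferInstance, ?_⟩
  have := card_eq_pow_finrank (K := K) (V := E)
  rw [hcardE, hN] at this
  exact (Nat.pow_right_injective hq1 this.symm)


section RankToMatrix

variable {K : Type} [Field K] {M N : Type} [AddCommGroup M] [Module K M]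
  [AddCommGroup N] [Module K N]

lemma range_mulVecLin_toMatrix {ι κ : Type} [Fintype ι] [Fintype κ] [DecidableEq ι]
    (b : Basis ι K M) (c : Basis κ K N) (f : M →ₗ[K] N) :
    LinearMap.range (Matrix.mulVecLin (LinearMap.toMatrix b c f)) =
      Submodule.map (c.equivFun : N →ₗ[K] (κ → K)) (LinearMap.range f) := by
  ext y
  simp only [LinearMap.mem_range, Submodule.mem_map, Matrix.mulVecLin_apply]
  constructor
  · rintro ⟨x, rfl⟩
    refine ⟨f (b.equivFun.symm x), ⟨b.equivFun.symm x, rfl⟩, ?_⟩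
    have := LinearMap.toMatrix_mulVec_repr b c f (b.equivFun.symm x)
    have hx : ⇑(b.repr (b.equivFun.symm x)) = x := by
      ext i; simp [Basis.equivFun]
    rw [hx] at this
    rw [this]
    rfl
  · rintro ⟨_, ⟨x, rfl⟩, rfl⟩
    refine ⟨b.repr x, ?_⟩
    rw [LinearMap.toMatrix_mulVec_repr b c f x]
    rfl

lemma rank_toMatrix_eq {ι κ : Type} [Fintype ι] [Fintype κ] [DecidableEq ι]
    (b : Basis ι K M) (c : Basis κ K N) (f : M →ₗ[K] N) :
    (LinearMap.toMatrix b c f).rank = finrank K (LinearMap.range f) := by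
  rw [Matrix.rank, range_mulVecLin_toMatrix b c f]
  exact LinearEquiv.finrank_map_eq c.equivFun _

end RankToMatrix

section Phi

variable {K : Type} [Field K] [Fintype K] {L : Type} [Field L] [Fintype L] [Algebra K L]

/-- The `K`-linear map `x ↦ ∑ i, c i * x ^ (q ^ i)` on `L`. -/
noncomputable def phiMap (l : ℕ) (c : Fin (l + 1) → L) : L →ₗ[K] L where
  toFun x := ∑ i : Fin (l + 1), c i * x ^ (Fintype.card K ^ (i : ℕ))
  map_add' x y := by
    obtain ⟨p, hp⟩ := CharP.exists K
    obtain ⟨m, hpm, hcard⟩ := FiniteField.card K p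
    haveI : Fact p.Prime := ⟨hpm⟩
    haveI : CharP L p := charP_of_injective_algebraMap (algebraMap K L).injective p
    rw [← Finset.sum_add_distrib]
    refine Finset.sum_congr rfl fun i _ => ?_
    rw [← mul_add]
    congr 1
    rw [hcard, ← pow_mul, add_pow_char_pow, pow_mul]
  map_smul' a x := by
    simp only [RingHom.id_apply, Finset.smul_sum]
    refine Finset.sum_congr rfl fun i _ => ?_
    rw [Algebra.smul_def, Algebra.smul_def, mul_pow, ← map_pow,
      FiniteField.pow_card_pow]
    ring

lemma phiMap_sub (l : ℕ) (c c' : Fin (l + 1) → L) :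
    phiMap (K := K) l c - phiMap l c' = phiMap l (c - c') := by
  ext x
  simp only [LinearMap.sub_apply, phiMap, LinearMap.coe_mk, AddHom.coe_mk,
    Pi.sub_apply, sub_mul, Finset.sum_sub_distrib]

/-- The associated polynomial. -/
noncomputable def phiPoly (l : ℕ) (c : Fin (l + 1) → L) : L[X] :=
  ∑ i : Fin (l + 1), C (c i) * X ^ (Fintype.card K ^ (i : ℕ))

lemma phiPoly_coeff (l : ℕ) (c : Fin (l + 1) → L) (j : Fin (l + 1)) :
    (phiPoly (K := K) l c).coeff (Fintype.card K ^ (j : ℕ)) = c j := by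
  have hq1 : 1 < Fintype.card K := Fintype.one_lt_card
  rw [phiPoly, finset_sum_coeff]
  rw [Finset.sum_eq_single j]
  · simp
  · intro i _ hij
    rw [coeff_C_mul, coeff_X_pow, if_neg, mul_zero]
    intro h
    exact hij (Fin.ext (Nat.pow_right_injective hq1 h.symm))
  · simp

lemma phiPoly_ne_zero (l : ℕ) (c : Fin (l + 1) → L) (hc : c ≠ 0) :
    phiPoly (K := K) l c ≠ 0 := by
  intro h
  apply hc
  funext j
  have := phiPoly_coeff (K := K) l c j
  rw [h, coeff_zero] at this
  simp [← this]

lemma phiPoly_natDegree_le (l : ℕ) (c : Fin (l + 1) → L) :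
    (phiPoly (K := K) l c).natDegree ≤ Fintype.card K ^ l := by
  refine (natDegree_sum_le _ _).trans ?_
  rw [Finset.fold_max_le]
  refine ⟨Nat.zero_le _, fun i _ => ?_⟩
  refine (natDegree_C_mul_le _ _).trans ?_
  rw [natDegree_X_pow]
  exact Nat.pow_le_pow_right (le_of_lt Fintype.one_lt_card) (Nat.lt_succ_iff.mp i.2)

lemma phiMap_eval (l : ℕ) (c : Fin (l + 1) → L) (x : L) :
    phiMap (K := K) l c x = (phiPoly (K := K) l c).eval x := by
  simp [phiMap, phiPoly, eval_finset_sum]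

/-- kernel bound for nonzero linearized polynomials -/
lemma phiMap_ker_card_le (l : ℕ) (c : Fin (l + 1) → L) (hc : c ≠ 0) :
    Nat.card (LinearMap.ker (phiMap (K := K) l c)) ≤ Fintype.card K ^ l := by
  classical
  haveI : Fintype (LinearMap.ker (phiMap (K := K) l c)) := Fintype.ofFinite _
  rw [Nat.card_eq_fintype_card]
  set P := phiPoly (K := K) l c
  have hP : P ≠ 0 := phiPoly_ne_zero l c hc
  have hinj : Function.Injective
      (fun x : LinearMap.ker (phiMap (K := K) l c) => (⟨(x : L), by
        rw [Multiset.mem_toFinset, mem_roots hP, IsRoot.def, ← phiMap_eval]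
        exact x.2⟩ : P.roots.toFinset)) := by
    intro x y h
    exact Subtype.ext (by simpa using congrArg Subtype.val h)
  calc Fintype.card (LinearMap.ker (phiMap (K := K) l c))
      ≤ Fintype.card P.roots.toFinset := Fintype.card_le_of_injective _ hinj
    _ = P.roots.toFinset.card := Fintype.card_coe _
    _ ≤ P.roots.card := Multiset.toFinset_card_le _
    _ ≤ P.natDegree := P.card_roots' 
    _ ≤ Fintype.card K ^ l := phiPoly_natDegree_le l c

lemma phiMap_finrank_ker_le (l : ℕ) (c : Fin (l + 1) → L) (hc : c ≠ 0) :
    finrank K (LinearMap.ker (phiMap (K := K) l c)) ≤ l := by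
  have h1 := phiMap_ker_card_le (K := K) l c hc
  haveI : Fintype (LinearMap.ker (phiMap (K := K) l c)) := Fintype.ofFinite _
  have h2 := card_eq_pow_finrank (K := K) (V := LinearMap.ker (phiMap (K := K) l c))
  rw [Nat.card_eq_fintype_card, h2] at h1
  exact (Nat.pow_le_pow_iff_right Fintype.one_lt_card).mp h1

lemma phiMap_finrank_range_ge (l : ℕ) (c : Fin (l + 1) → L) (hc : c ≠ 0) :
    finrank K L - l ≤ finrank K (LinearMap.range (phiMap (K := K) l c)) := by
  have h1 := LinearMap.finrank_range_add_finrank_ker (phiMap (K := K) l c)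
  have h2 := phiMap_finrank_ker_le (K := K) l c hc
  omega

lemma phiMap_injective (l : ℕ) (hrank : 3 * l = finrank K L) (hl : 1 ≤ l) :
    Function.Injective (phiMap (K := K) (L := L) l) := by
  intro c c' h
  by_contra hne
  have hc : c - c' ≠ 0 := sub_ne_zero_of_ne hne
  have hker : LinearMap.ker (phiMap (K := K) l (c - c')) = ⊤ := by
    rw [LinearMap.ker_eq_top, ← phiMap_sub, h, sub_self]
  have := phiMap_finrank_ker_le (K := K) l (c - c') hc
  rw [hker, finrank_top] at this
  omega

end Phi


section Graph

variable {K : Type} [Field K] {k v : ℕ}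

/-- The linear map whose range is the row span of `(I | A)`. -/
def gmap (A : Matrix (Fin k) (Fin (v - k)) K) : (Fin k → K) →ₗ[K] (Fin v → K) where
  toFun u := fun j =>
    if h : (j : ℕ) < k then u ⟨(j : ℕ), h⟩
    else if h2 : (j : ℕ) - k < v - k then ∑ i, u i * A i ⟨(j : ℕ) - k, h2⟩ else 0
  map_add' u w := by
    funext j
    by_cases h : (j : ℕ) < k
    · simp [h]
    · by_cases h2 : (j : ℕ) - k < v - k
      · simp [h, h2, add_mul, Finset.sum_add_distrib]
      · simp [h, h2]
  map_smul' a u := by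
    funext j
    by_cases h : (j : ℕ) < k
    · simp [h]
    · by_cases h2 : (j : ℕ) - k < v - k
      · simp [h, h2, Finset.mul_sum, mul_assoc]
      · simp [h, h2]

lemma gmap_single (A : Matrix (Fin k) (Fin (v - k)) K) (i : Fin k) :
    gmap (v := v) A (Pi.single i 1) = liftRow A i := by
  funext j
  simp only [gmap, liftRow, LinearMap.coe_mk, AddHom.coe_mk]
  by_cases h : (j : ℕ) < k
  · simp only [h, if_pos, dif_pos]
    rw [Pi.single_apply]
    by_cases he : (i : ℕ) = (j : ℕ)
    · rw [if_pos he, if_pos]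
      exact Fin.ext he.symm
    · rw [if_neg he, if_neg]
      intro hc
      exact he (congrArg Fin.val hc).symm
  · simp only [h, if_neg, dif_neg, not_false_iff]
    by_cases h2 : (j : ℕ) - k < v - k
    · rw [dif_pos h2, dif_pos h2]
      rw [Finset.sum_eq_single i]
      · simp
      · intro b _ hb
        rw [Pi.single_apply, if_neg hb, zero_mul]
      · simp
    · rw [dif_neg h2, dif_neg h2]

lemma gmap_eq_sum (A : Matrix (Fin k) (Fin (v - k)) K) (u : Fin k → K) :
    gmap (v := v) A u = ∑ i, u i • liftRow A i := by
  have : u = ∑ i, u i • (Pi.single i 1 : Fin k → K) := by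
    funext j
    simp [Pi.single_apply, Finset.sum_apply]
  conv_lhs => rw [this]
  rw [map_sum]
  refine Finset.sum_congr rfl fun i _ => ?_
  rw [map_smul, gmap_single]

lemma span_liftRow_eq (A : Matrix (Fin k) (Fin (v - k)) K) :
    Submodule.span K (Set.range (liftRow A)) = LinearMap.range (gmap (v := v) A) := by
  apply le_antisymm
  · rw [Submodule.span_le]
    rintro x ⟨i, rfl⟩
    exact ⟨Pi.single i 1, gmap_single A i⟩
  · rintro x ⟨u, rfl⟩
    rw [gmap_eq_sum]
    exact Submodule.sum_mem _ fun i _ =>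
      Submodule.smul_mem _ _ (Submodule.subset_span ⟨i, rfl⟩)

lemma gmap_head (hkv : k ≤ v) (A : Matrix (Fin k) (Fin (v - k)) K) (u : Fin k → K)
    (i : Fin k) : gmap (v := v) A u ⟨(i : ℕ), lt_of_lt_of_le i.2 hkv⟩ = u i := by
  simp only [gmap, LinearMap.coe_mk, AddHom.coe_mk]
  rw [dif_pos i.2]

lemma gmap_tail (hkv : k ≤ v) (A : Matrix (Fin k) (Fin (v - k)) K) (u : Fin k → K)
    (j : Fin (v - k)) :
    gmap (v := v) A u ⟨k + (j : ℕ), by omega⟩ = ∑ i, u i * A i j := by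
  have h1 : ¬ (k + (j : ℕ) < k) := by omega
  have hj : (j : ℕ) < v - k := j.2
  simp only [gmap, LinearMap.coe_mk, AddHom.coe_mk]
  rw [dif_neg h1, dif_pos (by omega : k + (j : ℕ) - k < v - k)]
  have h5 : (⟨k + (j : ℕ) - k, by omega⟩ : Fin (v - k)) = j := Fin.ext (by simp)
  rw [h5]

lemma gmap_injective (hkv : k ≤ v) (A : Matrix (Fin k) (Fin (v - k)) K) :
    Function.Injective (gmap (v := v) A) := by
  rw [← LinearMap.ker_eq_bot]
  rw [LinearMap.ker_eq_bot']
  intro u hu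
  funext i
  have := gmap_head hkv A u i
  rw [hu] at this
  exact this.symm

lemma finrank_range_gmap (hkv : k ≤ v) (A : Matrix (Fin k) (Fin (v - k)) K) :
    finrank K (LinearMap.range (gmap (v := v) A)) = k := by
  rw [LinearMap.finrank_range_of_inj (gmap_injective hkv A)]
  simp

lemma range_gmap_inf_gamma (hkv : k ≤ v) (A : Matrix (Fin k) (Fin (v - k)) K) :
    LinearMap.range (gmap (v := v) A) ⊓ Gamma K k v = ⊥ := by
  rw [eq_bot_iff]
  rintro x ⟨⟨u, rfl⟩, hx⟩
  have hu : u = 0 := by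
    funext i
    have h1 := gmap_head hkv A u i
    have h2 := hx ⟨(i : ℕ), lt_of_lt_of_le i.2 hkv⟩ i.2
    rw [h2] at h1
    exact h1.symm
  rw [hu, map_zero]
  exact Submodule.zero_mem _

lemma range_gmap_inf_range_gmap (hkv : k ≤ v) (A B : Matrix (Fin k) (Fin (v - k)) K) :
    LinearMap.range (gmap (v := v) A) ⊓ LinearMap.range (gmap (v := v) B) =
      Submodule.map (gmap (v := v) A) (LinearMap.ker (Matrix.mulVecLin (A - B).transpose)) := by
  ext x
  simp only [Submodule.mem_inf, LinearMap.mem_range, Submodule.mem_map, LinearMap.mem_ker]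
  constructor
  · rintro ⟨⟨u, rfl⟩, ⟨w, hw⟩⟩
    have huw : u = w := by
      funext i
      have h1 := gmap_head hkv A u i
      have h2 := gmap_head hkv B w i
      rw [hw] at h2
      rw [h1] at h2
      exact h2
    subst huw
    refine ⟨u, ?_, rfl⟩
    funext j
    have h1 := gmap_tail hkv A u j
    have h2 := gmap_tail hkv B u j
    rw [hw] at h2
    rw [h1] at h2
    simp only [Matrix.mulVecLin_apply, Matrix.mulVec, dotProduct, Matrix.transpose_apply, Matrix.sub_apply, Pi.zero_apply]
    have h4 : ∑ i, (A i j - B i j) * u i = (∑ i, u i * A i j) - ∑ i, u i * B i j := by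
      rw [← Finset.sum_sub_distrib]
      exact Finset.sum_congr rfl fun i _ => by ring
    rw [h4, h2, sub_self]
  · rintro ⟨u, hu, rfl⟩
    refine ⟨⟨u, rfl⟩, ⟨u, ?_⟩⟩
    funext j
    by_cases h : (j : ℕ) < k
    · simp only [gmap, LinearMap.coe_mk, AddHom.coe_mk]
      rw [dif_pos h, dif_pos h]
    · simp only [gmap, LinearMap.coe_mk, AddHom.coe_mk]
      rw [dif_neg h, dif_neg h]
      by_cases h2 : (j : ℕ) - k < v - k
      · rw [dif_pos h2, dif_pos h2]
        have := congrFun hu ⟨(j : ℕ) - k, h2⟩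
        simp only [Matrix.mulVecLin_apply, Matrix.mulVec, dotProduct,
          Matrix.transpose_apply, Matrix.sub_apply, Pi.zero_apply] at this
        have h4 : (∑ i, u i * A i ⟨(j:ℕ) - k, h2⟩) - ∑ i, u i * B i ⟨(j:ℕ) - k, h2⟩ = 0 := by
          rw [← Finset.sum_sub_distrib, ← this]
          exact Finset.sum_congr rfl fun i _ => by ring
        exact (sub_eq_zero.mp h4).symm
      · rw [dif_neg h2, dif_neg h2]

lemma finrank_inf_graphs (hkv : k ≤ v) (A B : Matrix (Fin k) (Fin (v - k)) K)
    (r : ℕ) (hr : r ≤ (A - B).rank) :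
    finrank K ↥(LinearMap.range (gmap (v := v) A) ⊓ LinearMap.range (gmap (v := v) B)) ≤ k - r := by
  rw [range_gmap_inf_range_gmap hkv A B]
  have e := Submodule.equivMapOfInjective _ (gmap_injective hkv A)
    (LinearMap.ker (Matrix.mulVecLin (A - B).transpose))
  rw [← LinearEquiv.finrank_eq e]
  have h1 := LinearMap.finrank_range_add_finrank_ker (Matrix.mulVecLin (A - B).transpose)
  have h2 : finrank K (LinearMap.range (Matrix.mulVecLin (A - B).transpose)) = (A - B).rank := by
    rw [← Matrix.rank_transpose (A - B)]
    rfl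
  have h3 : finrank K (Fin k → K) = k := by simp
  omega

end Graph


section SDist

variable {K : Type} [Field K] {v : ℕ}

lemma sDist_ge (U W : Submodule K (Fin v → K)) {κ t : ℕ}
    (hU : finrank K U = κ) (hW : finrank K W = κ)
    (hI : finrank K ↥(U ⊓ W) ≤ t) (ht : t ≤ κ) :
    2 * κ - 2 * t ≤ sDist U W := by
  have h1 := Submodule.finrank_sup_add_finrank_inf_eq U W
  rw [hU, hW] at h1
  rw [sDist]
  omega

/-- if `W` meets `Γ` trivially and `U` meets `Γ` in dimension at least `c`, then
`dim (U ⊓ W) ≤ dim U - c`. -/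
lemma finrank_inf_le_of_gamma {U W G : Submodule K (Fin v → K)}
    (hWG : W ⊓ G = ⊥) {c : ℕ} (hUG : c ≤ finrank K ↥(U ⊓ G)) :
    finrank K ↥(U ⊓ W) ≤ finrank K U - c := by
  set S := U ⊓ W
  set T := U ⊓ G
  have hST : S ⊓ T = ⊥ := by
    rw [eq_bot_iff, ← hWG]
    exact le_inf (inf_le_left.trans inf_le_right) (inf_le_right.trans inf_le_right)
  have h1 := Submodule.finrank_sup_add_finrank_inf_eq S T
  rw [hST] at h1
  simp only [finrank_bot, add_zero] at h1
  have h2 : S ⊔ T ≤ U := sup_le inf_le_left inf_le_left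
  have h3 := Submodule.finrank_mono h2
  omega

end SDist


section Ext

variable {K : Type} [Field K] {E : Type} [Field E] [Algebra K E]
variable {l : ℕ} (bE : Basis (Fin l) K E)

/-- the index arithmetic: `finProdFinEquiv (a, b) = b + l * a` for `a : Fin 6`, `b : Fin l`. -/
lemma idx_lt_iff {a b : ℕ} (ha : b < l) : b + l * a < 3 * l ↔ a < 3 := by
  constructor
  · intro h
    by_contra hc
    push_neg at hc
    have : 3 * l ≤ l * a := by
      calc 3 * l = l * 3 := by ring
      _ ≤ l * a := Nat.mul_le_mul_left l hc
    omega
  · intro h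
    have h1 : a ≤ 2 := by omega
    have : l * a ≤ l * 2 := Nat.mul_le_mul_left l h1
    omega

/-- the `K`-linear identification of `(Fin 6 → E)` with `Fin (6*l) → K`. -/
noncomputable def psiE : (Fin 6 → E) ≃ₗ[K] (Fin (6 * l) → K) :=
  (LinearEquiv.piCongrRight (fun _ : Fin 6 => bE.equivFun)) ≪≫ₗ
    (LinearEquiv.curry K K (Fin 6) (Fin l)).symm ≪≫ₗ
    (LinearEquiv.funCongrLeft K K (finProdFinEquiv (m := 6) (n := l)).symm)

lemma psiE_apply (x : Fin 6 → E) (j : Fin (6 * l)) :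
    psiE bE x j = bE.equivFun (x (finProdFinEquiv.symm j).1) (finProdFinEquiv.symm j).2 := by
  simp [psiE, LinearEquiv.funCongrLeft]

/-- membership in `Gamma` corresponds to vanishing of the first three `E`-coordinates. -/
lemma psiE_mem_gamma_iff (hl : 1 ≤ l) (x : Fin 6 → E) :
    psiE bE x ∈ Gamma K (3 * l) (6 * l) ↔ ∀ a : Fin 6, (a : ℕ) < 3 → x a = 0 := by
  constructor
  · intro h a ha
    have : bE.equivFun (x a) = 0 := by
      funext b
      set j : Fin (6 * l) := finProdFinEquiv (a, b)
      have hj : (j : ℕ) = (b : ℕ) + l * (a : ℕ) := rfl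
      have hjlt : (j : ℕ) < 3 * l := by
        rw [hj]
        exact (idx_lt_iff b.2).mpr ha
      have := h j hjlt
      rw [psiE_apply] at this
      rw [Equiv.symm_apply_apply] at this
      exact this
    have := congrArg bE.equivFun.symm this
    rw [LinearEquiv.symm_apply_apply, map_zero] at this
    exact this
  · intro h j hj
    rw [psiE_apply]
    have hj2 : j = finProdFinEquiv (finProdFinEquiv.symm j) := (Equiv.apply_symm_apply _ _).symm
    have hjval : (j : ℕ) = ((finProdFinEquiv.symm j).2 : ℕ) + l * ((finProdFinEquiv.symm j).1 : ℕ) := by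
      conv_lhs => rw [hj2]
      rfl
    have ha : ((finProdFinEquiv.symm j).1 : ℕ) < 3 := by
      rw [hjval] at hj
      exact (idx_lt_iff (finProdFinEquiv.symm j).2.2).mp hj
    rw [h _ ha, map_zero]
    rfl

end Ext

section E36

variable {E : Type} [Field E]

/-- explicit equivalence `(Fin 3 → E) × (Fin 3 → E) ≃ₗ[E] (Fin 6 → E)`. -/
def e36 : ((Fin 3 → E) × (Fin 3 → E)) ≃ₗ[E] (Fin 6 → E) where
  toFun xy := fun j => if h : (j : ℕ) < 3 then xy.1 ⟨(j : ℕ), h⟩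
    else xy.2 ⟨(j : ℕ) - 3, by omega⟩
  invFun z := (fun i => z ⟨(i : ℕ), by omega⟩, fun i => z ⟨(i : ℕ) + 3, by omega⟩)
  map_add' x y := by
    funext j
    fin_cases j <;> rfl
  map_smul' c x := by
    funext j
    fin_cases j <;> rfl
  left_inv := by
    rintro ⟨x, y⟩
    refine Prod.ext (funext fun i => ?_) (funext fun i => ?_) <;> fin_cases i <;> rfl
  right_inv := by
    intro z
    funext j
    fin_cases j <;> rfl

lemma e36_fst_zero (y : Fin 3 → E) (j : Fin 6) (hj : (j : ℕ) < 3) :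
    e36 ((0 : Fin 3 → E), y) j = 0 := by
  fin_cases j <;> first | rfl | exact absurd hj (by norm_num)

/-- dot-product functional. -/
def dotf (v : Fin 3 → E) : (Fin 3 → E) →ₗ[E] E where
  toFun x := ∑ i, v i * x i
  map_add' x y := by simp [mul_add, Finset.sum_add_distrib]
  map_smul' c x := by
    simp only [Pi.smul_apply, smul_eq_mul, RingHom.id_apply, Finset.mul_sum]
    exact Finset.sum_congr rfl fun i _ => by ring

lemma dotf_single (v : Fin 3 → E) (i : Fin 3) : dotf v (Pi.single i 1) = v i := by
  simp only [dotf, LinearMap.coe_mk, AddHom.coe_mk]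
  rw [Finset.sum_eq_single i]
  · simp
  · intro b _ hb
    rw [Pi.single_apply, if_neg (by exact fun hc => hb hc), mul_zero]
  · simp

lemma dotf_smul_vec (c : E) (v x : Fin 3 → E) : dotf (c • v) x = c * dotf v x := by
  simp only [dotf, LinearMap.coe_mk, AddHom.coe_mk, Pi.smul_apply, smul_eq_mul, Finset.mul_sum]
  exact Finset.sum_congr rfl fun i _ => by ring

lemma dotf_inj (v w : Fin 3 → E) (h : dotf v = dotf w) : v = w := by
  funext i
  have := congrFun (congrArg DFunLike.coe h) (Pi.single i 1)
  rwa [dotf_single, dotf_single] at this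

lemma finrank_ker_dotf (v : Fin 3 → E) (i : Fin 3) (hv : v i = 1) :
    finrank E (LinearMap.ker (dotf v)) = 2 := by
  have hsurj : LinearMap.range (dotf v) = ⊤ := by
    rw [LinearMap.range_eq_top]
    intro e
    refine ⟨e • (Pi.single i 1 : Fin 3 → E), ?_⟩
    rw [map_smul, dotf_single, hv, smul_eq_mul, mul_one]
  have h1 := LinearMap.finrank_range_add_finrank_ker (dotf v)
  rw [hsurj, finrank_top] at h1
  have h2 : finrank E (Fin 3 → E) = 3 := by simp
  have h3 : finrank E E = 1 := finrank_self E
  omega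

/-- two functionals with the same kernel are proportional (when `f ≠ 0`). -/
lemma functional_ker_eq {V : Type} [AddCommGroup V] [Module E V]
    {f g : V →ₗ[E] E} (hf : f ≠ 0) (h : LinearMap.ker f = LinearMap.ker g) :
    ∃ c : E, g = c • f := by
  have : ∃ x0, f x0 ≠ 0 := by
    by_contra hc
    push_neg at hc
    exact hf (LinearMap.ext fun x => hc x)
  obtain ⟨x0, hx0⟩ := this
  refine ⟨g x0 / f x0, ?_⟩
  ext x
  have hker : f (x - (f x / f x0) • x0) = 0 := by
    rw [map_sub, map_smul, smul_eq_mul, div_mul_cancel₀ _ hx0, sub_self]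
  rw [← LinearMap.mem_ker, h, LinearMap.mem_ker, map_sub, map_smul, smul_eq_mul,
    sub_eq_zero] at hker
  rw [LinearMap.smul_apply, smul_eq_mul]
  rw [hker]
  field_simp

end E36

section Pts

variable {E : Type} [Field E]

/-- normalized representatives of the points of `PG(2,E)`. -/
def Pts (E : Type) [Field E] : Set (Fin 3 → E) :=
  (Set.range fun p : E × E => ![1, p.1, p.2]) ∪
    (Set.range fun a : E => ![0, 1, a]) ∪ {![0, 0, 1]}

lemma pts_pivot {v : Fin 3 → E} (hv : v ∈ Pts E) : ∃ i, v i = 1 := by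
  rcases hv with (⟨p, rfl⟩ | ⟨a, rfl⟩) | rfl
  · exact ⟨0, rfl⟩
  · exact ⟨1, rfl⟩
  · exact ⟨2, rfl⟩

lemma pts_smul_eq {v w : Fin 3 → E} (hv : v ∈ Pts E) (hw : w ∈ Pts E)
    (c : E) (h : v = c • w) : v = w := by
  have h0 := congrFun h 0
  have h1 := congrFun h 1
  have h2 := congrFun h 2
  simp only [Pi.smul_apply, smul_eq_mul] at h0 h1 h2
  rcases hv with (⟨p, rfl⟩ | ⟨a, rfl⟩) | rfl <;>
    rcases hw with (⟨p', rfl⟩ | ⟨a', rfl⟩) | rfl <;>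
    simp only [Matrix.cons_val_zero, Matrix.cons_val_one, Matrix.head_cons,
      Matrix.cons_val_two, Matrix.tail_cons] at h0 h1 h2
  · -- (1,p) vs (1,p')
    rw [mul_one] at h0
    subst h0
    rw [one_mul] at h1 h2
    have : p = p' := Prod.ext h1 h2
    rw [this]
  · exfalso; rw [mul_zero] at h0; exact one_ne_zero h0
  · exfalso; rw [mul_zero] at h0; exact one_ne_zero h0
  · exfalso
    rw [mul_one] at h0
    rw [← h0, zero_mul] at h1
    exact one_ne_zero h1
  · rw [mul_one] at h1
    subst h1
    rw [one_mul] at h2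
    rw [show a = a' from h2]
  · exfalso; rw [mul_zero] at h1; exact one_ne_zero h1
  · exfalso
    rw [mul_one] at h0
    rw [← h0, zero_mul] at h2
    exact one_ne_zero h2
  · exfalso
    rw [mul_one] at h1
    rw [← h1, zero_mul] at h2
    exact one_ne_zero h2
  · rfl

lemma pts_ncard [Fintype E] :
    (Pts E).ncard = Fintype.card E ^ 2 + Fintype.card E + 1 := by
  classical
  have hA : (Set.range fun p : E × E => (![1, p.1, p.2] : Fin 3 → E)).ncard
      = Fintype.card E ^ 2 := by
    rw [← Set.image_univ, Set.ncard_image_of_injective _ ?_, Set.ncard_univ,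
      Nat.card_eq_fintype_card, Fintype.card_prod, sq]
    intro p p' hp
    have h1 := congrFun hp 1
    have h2 := congrFun hp 2
    simp only [Matrix.cons_val_one, Matrix.head_cons, Matrix.cons_val_two,
      Matrix.tail_cons] at h1 h2
    exact Prod.ext h1 h2
  have hB : (Set.range fun a : E => (![0, 1, a] : Fin 3 → E)).ncard = Fintype.card E := by
    rw [← Set.image_univ, Set.ncard_image_of_injective _ ?_, Set.ncard_univ,
      Nat.card_eq_fintype_card]
    intro a a' ha
    have h2 := congrFun ha 2
    simpa using h2
  have hC : ({![0, 0, 1]} : Set (Fin 3 → E)).ncard = 1 := Set.ncard_singleton _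
  have hd1 : Disjoint (Set.range fun p : E × E => (![1, p.1, p.2] : Fin 3 → E))
      (Set.range fun a : E => (![0, 1, a] : Fin 3 → E)) := by
    rw [Set.disjoint_left]
    rintro x ⟨p, rfl⟩ ⟨a, hx⟩
    have h0 := congrFun hx 0
    simp at h0
  have hd2 : Disjoint ((Set.range fun p : E × E => (![1, p.1, p.2] : Fin 3 → E)) ∪
      (Set.range fun a : E => (![0, 1, a] : Fin 3 → E))) ({![0, 0, 1]} : Set (Fin 3 → E)) := by
    rw [Set.disjoint_right]
    rintro x rfl hx
    rcases hx with ⟨p, hp⟩ | ⟨a, ha⟩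
    · have h0 := congrFun hp 0
      simp at h0
    · have h1 := congrFun ha 1
      simp at h1
  rw [Pts, Set.ncard_union_eq hd2 (Set.toFinite _) (Set.toFinite _),
    Set.ncard_union_eq hd1 (Set.toFinite _) (Set.toFinite _), hA, hB, hC]

end Pts

section ProdSub

variable {E : Type} [Field E] {M N : Type} [AddCommGroup M] [Module E M]
  [AddCommGroup N] [Module E N]

/-- `p.prod q` is equivalent to `p × q`. -/
def prodSubEquiv (p : Submodule E M) (q : Submodule E N) :
    ↥(p.prod q) ≃ₗ[E] (↥p × ↥q) where
  toFun x := (⟨x.1.1, x.2.1⟩, ⟨x.1.2, x.2.2⟩)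
  invFun y := ⟨(y.1.1, y.2.1), ⟨y.1.2, y.2.2⟩⟩
  map_add' x y := rfl
  map_smul' c x := rfl
  left_inv x := rfl
  right_inv y := rfl

lemma finrank_prod_sub [FiniteDimensional E M] [FiniteDimensional E N]
    (p : Submodule E M) (q : Submodule E N) :
    finrank E ↥(p.prod q) = finrank E p + finrank E q := by
  rw [LinearEquiv.finrank_eq (prodSubEquiv p q)]
  exact Module.finrank_prod

end ProdSub

section Restrict

variable (K E : Type) [Field K] [Field E] [Algebra K E] {V : Type} [AddCommGroup V]
  [Module E V] [Module K V] [IsScalarTower K E V]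

lemma finrank_restrict (p : Submodule E V) :
    finrank K ↥(p.restrictScalars K) = finrank K E * finrank E ↥p := by
  rw [LinearEquiv.finrank_eq ((Submodule.restrictScalarsEquiv K E V p).restrictScalars K)]
  exact (Module.finrank_mul_finrank K E ↥p).symm

end Restrict

section MoreGraph

variable {K : Type} [Field K] {k v : ℕ}

lemma gmap_range_inj (hkv : k ≤ v) (A B : Matrix (Fin k) (Fin (v - k)) K)
    (h : LinearMap.range (gmap (v := v) A) = LinearMap.range (gmap (v := v) B)) : A = B := by
  ext i j
  have hmem : gmap (v := v) A ((Pi.single i 1 : Fin k → K)) ∈ LinearMap.range (gmap (v := v) B) := by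
    rw [← h]; exact LinearMap.mem_range_self _ _
  obtain ⟨u, hu⟩ := hmem
  have hui : u = (Pi.single i 1 : Fin k → K) := by
    funext i'
    have h1 := gmap_head hkv B u i'
    have h2 := gmap_head hkv A ((Pi.single i 1 : Fin k → K)) i'
    rw [hu] at h1
    rw [h2] at h1
    exact h1.symm
  subst hui
  have h1 := gmap_tail hkv B ((Pi.single i 1 : Fin k → K)) j
  have h2 := gmap_tail hkv A ((Pi.single i 1 : Fin k → K)) j
  rw [hu] at h1
  rw [h2] at h1
  have hs : ∀ (C : Matrix (Fin k) (Fin (v - k)) K),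
      ∑ i', (Pi.single i 1 : Fin k → K) i' * C i' j = C i j := by
    intro C
    rw [Finset.sum_eq_single i]
    · simp
    · intro b _ hb
      rw [Pi.single_apply, if_neg (by exact fun hc => hb hc), zero_mul]
    · simp
  rw [hs A, hs B] at h1
  exact h1

end MoreGraph

section PtsMore

variable {E : Type} [Field E]

lemma pts_ne_zero {v : Fin 3 → E} (hv : v ∈ Pts E) : v ≠ 0 := by
  obtain ⟨i, hi⟩ := pts_pivot hv
  intro h0
  rw [h0] at hi
  exact one_ne_zero hi.symm

lemma dotf_ne_zero {v : Fin 3 → E} (hv : v ∈ Pts E) : dotf v ≠ 0 := by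
  obtain ⟨i, hi⟩ := pts_pivot hv
  intro h0
  have := dotf_single v i
  rw [h0] at this
  simp only [LinearMap.zero_apply] at this
  rw [← this] at hi
  exact one_ne_zero hi.symm

lemma span_pts_inf {v w : Fin 3 → E} (hv : v ∈ Pts E) (hw : w ∈ Pts E) (hne : v ≠ w) :
    Submodule.span E {v} ⊓ Submodule.span E {w} = ⊥ := by
  rw [eq_bot_iff]
  rintro x ⟨hx1, hx2⟩
  rw [SetLike.mem_coe, Submodule.mem_span_singleton] at hx1 hx2
  obtain ⟨a, rfl⟩ := hx1
  obtain ⟨b, hb⟩ := hx2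
  simp only [Submodule.mem_bot]
  by_cases ha : a = 0
  · rw [ha, zero_smul]
  · exfalso
    apply hne
    apply pts_smul_eq hv hw (a⁻¹ * b)
    have : a⁻¹ • (b • w) = a⁻¹ • (a • v) := congrArg _ hb
    rw [smul_smul, smul_smul, inv_mul_cancel₀ ha, one_smul] at this
    exact this.symm

lemma ker_dotf_inj {v w : Fin 3 → E} (hv : v ∈ Pts E) (hw : w ∈ Pts E)
    (h : LinearMap.ker (dotf v) = LinearMap.ker (dotf w)) : v = w := by
  obtain ⟨c, hc⟩ := functional_ker_eq (dotf_ne_zero hv) h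
  have hdw : dotf w = dotf (c • v) := by
    ext x
    rw [hc]
    simp [dotf_smul_vec]
  have hw' := dotf_inj _ _ hdw
  exact (pts_smul_eq hw hv c hw').symm

lemma finrank_ker_inf_le {v w : Fin 3 → E} (hv : v ∈ Pts E) (hw : w ∈ Pts E) (hne : v ≠ w) :
    finrank E ↥(LinearMap.ker (dotf v) ⊓ LinearMap.ker (dotf w)) ≤ 1 := by
  obtain ⟨i, hi⟩ := pts_pivot hv
  obtain ⟨i', hi'⟩ := pts_pivot hw
  have h2 : finrank E (LinearMap.ker (dotf v)) = 2 := finrank_ker_dotf v i hi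
  have h2' : finrank E (LinearMap.ker (dotf w)) = 2 := finrank_ker_dotf w i' hi'
  by_contra hgt
  push_neg at hgt
  have hle : LinearMap.ker (dotf v) ⊓ LinearMap.ker (dotf w) ≤ LinearMap.ker (dotf v) :=
    inf_le_left
  have heq : LinearMap.ker (dotf v) ⊓ LinearMap.ker (dotf w) = LinearMap.ker (dotf v) := by
    apply Submodule.eq_of_le_of_finrank_le hle
    rw [h2]
    omega
  have hVW : LinearMap.ker (dotf v) ≤ LinearMap.ker (dotf w) := by
    rw [← heq]
    exact inf_le_right
  have : LinearMap.ker (dotf v) = LinearMap.ker (dotf w) :=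
    Submodule.eq_of_le_of_finrank_le hVW (by rw [h2, h2'])
  exact hne (ker_dotf_inj hv hw this)

end PtsMore

/-- for every `l ≥ 1` there is a
`(6l, q^(3l(l+1)) + q^(2l) + q^l + 1, 4l; 3l)_q` CDC containing an LMRD. -/
theorem stmt18 (q : ℕ) (K : Type) [Field K] [Fintype K] (hq : Fintype.card K = q)
    (l : ℕ) (hl : 1 ≤ l) :
    ∃ C M : Set (Submodule K (Fin (6 * l) → K)),
      IsCDC K (6 * l) ((4 * l : ℕ) : ℤ) ((3 * l : ℕ) : ℤ) C ∧
      IsLMRD q K (6 * l) (4 * l) (3 * l) M ∧ M ⊆ C ∧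
      C.ncard = q ^ (3 * l * (l + 1)) + q ^ (2 * l) + q ^ l + 1 := by
  classical
  subst hq
  set q := Fintype.card K with hqdef
  have hq1 : 1 < q := Fintype.one_lt_card
  have hkv : 3 * l ≤ 6 * l := by omega
  obtain ⟨L, _, _, _, hL⟩ := exists_finite_ext K (3 * l) (by omega)
  obtain ⟨E, _, _, _, hEl⟩ := exists_finite_ext K l (by omega)
  have hcardL : Fintype.card L = q ^ (3 * l) := by
    rw [card_eq_pow_finrank (K := K) (V := L), hL]
  have hcardE : Fintype.card E = q ^ l := by
    rw [card_eq_pow_finrank (K := K) (V := E), hEl]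
  -- the MRD code
  let bcod : Basis (Fin (3 * l)) K L := (Module.finBasis K L).reindex (finCongr hL)
  let bdom : Basis (Fin (6 * l - 3 * l)) K L :=
    (Module.finBasis K L).reindex (finCongr (by omega))
  let T : (Fin (l + 1) → L) → Matrix (Fin (3 * l)) (Fin (6 * l - 3 * l)) K :=
    fun c => LinearMap.toMatrix bdom bcod (phiMap (K := K) l c)
  have hTinj : Function.Injective T := by
    intro c c' h
    exact phiMap_injective (K := K) (L := L) l hL.symm hl
      ((LinearMap.toMatrix bdom bcod).injective h)
  have hTrank : ∀ c c', c ≠ c' → 2 * l ≤ (T c - T c').rank := by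
    intro c c' hne
    have h1 : T c - T c' = LinearMap.toMatrix bdom bcod (phiMap (K := K) l (c - c')) := by
      show LinearMap.toMatrix bdom bcod _ - LinearMap.toMatrix bdom bcod _ = _
      rw [← map_sub, phiMap_sub]
    rw [h1, rank_toMatrix_eq]
    have h2 := phiMap_finrank_range_ge (K := K) l (c - c') (sub_ne_zero_of_ne hne)
    omega
  set R : Set (Matrix (Fin (3 * l)) (Fin (6 * l - 3 * l)) K) := Set.range T with hRdef
  set Mset : Set (Submodule K (Fin (6 * l) → K)) :=
    {U | ∃ A ∈ R, U = Submodule.span K (Set.range (liftRow A))} with hMdef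
  have hMG : ∀ (A : Matrix (Fin (3 * l)) (Fin (6 * l - 3 * l)) K),
      Submodule.span K (Set.range (liftRow A)) = LinearMap.range (gmap (v := 6 * l) A) :=
    fun A => span_liftRow_eq (v := 6 * l) A
  -- the extra code
  let bE : Basis (Fin l) K E := (Module.finBasis K E).reindex (finCongr hEl)
  let Uext : (Fin 3 → E) → Submodule K (Fin (6 * l) → K) := fun p =>
    Submodule.map (psiE bE).toLinearMap
      ((Submodule.map (e36 (E := E)).toLinearMap
        ((Submodule.span E {p}).prod (LinearMap.ker (dotf p)))).restrictScalars K)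
  set Ext : Set (Submodule K (Fin (6 * l) → K)) := Uext '' Pts E with hExtdef
  set C : Set (Submodule K (Fin (6 * l) → K)) := Mset ∪ Ext with hCdef
  -- basic facts about extras
  have hRS : ∀ (p0 : Submodule E (Fin 3 → E)) (p1 : Submodule E (Fin 3 → E)),
      finrank K ↥(Submodule.map (psiE bE).toLinearMap
        ((Submodule.map (e36 (E := E)).toLinearMap (p0.prod p1)).restrictScalars K))
      = l * (finrank E p0 + finrank E p1) := by
    intro p0 p1
    rw [LinearEquiv.finrank_map_eq (psiE bE)]
    rw [finrank_restrict K E]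
    rw [LinearEquiv.finrank_map_eq (e36 (E := E))]
    rw [finrank_prod_sub, hEl]
  have hUfin : ∀ p ∈ Pts E, finrank K ↥(Uext p) = 3 * l := by
    intro p hp
    show finrank K ↥(Submodule.map _ _) = 3 * l
    rw [hRS]
    obtain ⟨i, hi⟩ := pts_pivot hp
    rw [finrank_span_singleton (pts_ne_zero hp), finrank_ker_dotf p i hi]
    ring
  have hUinf : ∀ p ∈ Pts E, ∀ p' ∈ Pts E, p ≠ p' →
      finrank K ↥(Uext p ⊓ Uext p') ≤ l := by
    intro p hp p' hp' hne
    have h1 : Uext p ⊓ Uext p' =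
        Submodule.map (psiE bE).toLinearMap
          ((Submodule.map (e36 (E := E)).toLinearMap
            (((⊥ : Submodule E (Fin 3 → E))).prod
              (LinearMap.ker (dotf p) ⊓ LinearMap.ker (dotf p')))).restrictScalars K) := by
      show Submodule.map _ _ ⊓ Submodule.map _ _ = _
      rw [← Submodule.map_inf (psiE bE).toLinearMap (psiE bE).injective]
      congr 1
      have h2 : (Submodule.map (e36 (E := E)).toLinearMap
            ((Submodule.span E {p}).prod (LinearMap.ker (dotf p)))).restrictScalars K ⊓
          (Submodule.map (e36 (E := E)).toLinearMap
            ((Submodule.span E {p'}).prod (LinearMap.ker (dotf p')))).restrictScalars K =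
          ((Submodule.map (e36 (E := E)).toLinearMap
            ((Submodule.span E {p}).prod (LinearMap.ker (dotf p))) ⊓
           Submodule.map (e36 (E := E)).toLinearMap
            ((Submodule.span E {p'}).prod (LinearMap.ker (dotf p')))).restrictScalars K) := rfl
      rw [h2]
      congr 1
      rw [← Submodule.map_inf (e36 (E := E)).toLinearMap (e36 (E := E)).injective]
      congr 1
      rw [Submodule.prod_inf_prod, span_pts_inf hp hp' hne]
    rw [h1, hRS]
    have h3 := finrank_ker_inf_le hp hp' hne
    have h4 : finrank E (⊥ : Submodule E (Fin 3 → E)) = 0 := finrank_bot E _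
    calc l * (finrank E (⊥ : Submodule E (Fin 3 → E)) +
          finrank E ↥(LinearMap.ker (dotf p) ⊓ LinearMap.ker (dotf p'))) 
        ≤ l * (0 + 1) := by
          apply Nat.mul_le_mul_left
          omega
      _ = l := by ring
  have hUGam : ∀ p ∈ Pts E, 2 * l ≤ finrank K ↥(Uext p ⊓ Gamma K (3 * l) (6 * l)) := by
    intro p hp
    set T0 : Submodule K (Fin (6 * l) → K) :=
      Submodule.map (psiE bE).toLinearMap
        ((Submodule.map (e36 (E := E)).toLinearMap
          (((⊥ : Submodule E (Fin 3 → E))).prod (LinearMap.ker (dotf p)))).restrictScalars K)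
      with hT0
    have hle1 : T0 ≤ Uext p := by
      apply Submodule.map_mono
      intro x hx
      have hx' : x ∈ Submodule.map (e36 (E := E)).toLinearMap
          (((⊥ : Submodule E (Fin 3 → E))).prod (LinearMap.ker (dotf p))) := hx
      exact Submodule.map_mono (f := (e36 (E := E)).toLinearMap) (Submodule.prod_mono bot_le le_rfl) hx'
    have hle2 : T0 ≤ Gamma K (3 * l) (6 * l) := by
      rintro x ⟨y, hy, rfl⟩
      obtain ⟨⟨z1, z2⟩, hz, rfl⟩ := hy
      have hz1 : z1 = 0 := hz.1
      subst hz1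
      show psiE bE (e36 (E := E) (0, z2)) ∈ Gamma K (3 * l) (6 * l)
      rw [psiE_mem_gamma_iff bE hl]
      intro a ha
      exact e36_fst_zero z2 a ha
    have hfin : finrank K ↥T0 = 2 * l := by
      rw [hT0, hRS]
      obtain ⟨i, hi⟩ := pts_pivot hp
      rw [finrank_ker_dotf p i hi, finrank_bot]
      ring
    calc 2 * l = finrank K ↥T0 := hfin.symm
      _ ≤ finrank K ↥(Uext p ⊓ Gamma K (3 * l) (6 * l)) :=
          Submodule.finrank_mono (le_inf hle1 hle2)
  -- dimension of code words
  have hdim : ∀ U ∈ C, finrank K ↥U = 3 * l := by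
    rintro U (⟨A, _, rfl⟩ | ⟨p, hp, rfl⟩)
    · rw [hMG A, finrank_range_gmap hkv A]
    · exact hUfin p hp
  -- trivial intersection of MRD part with Gamma
  have hMGam : ∀ U ∈ Mset, U ⊓ Gamma K (3 * l) (6 * l) = ⊥ := by
    rintro U ⟨A, _, rfl⟩
    rw [hMG A]
    exact range_gmap_inf_gamma hkv A
  -- intersections of any two distinct codewords
  have hinf : ∀ U ∈ C, ∀ W ∈ C, U ≠ W → finrank K ↥(U ⊓ W) ≤ l := by
    rintro U hU W hW hne
    rcases hU with ⟨A, hA, rfl⟩ | ⟨p, hp, rfl⟩ <;>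
      rcases hW with ⟨B, hB, rfl⟩ | ⟨p', hp', rfl⟩
    · -- both MRD
      obtain ⟨c, rfl⟩ := hA
      obtain ⟨c', rfl⟩ := hB
      have hcc : c ≠ c' := by
        intro h
        exact hne (by rw [h])
      have h1 := finrank_inf_graphs (v := 6 * l) hkv (T c) (T c') (2 * l) (hTrank c c' hcc)
      rw [hMG, hMG]
      omega
    · -- MRD vs extra
      rw [inf_comm]
      have h1 := finrank_inf_le_of_gamma (hMGam _ ⟨A, hA, rfl⟩) (hUGam p' hp')
      rw [hUfin p' hp'] at h1
      omega
    · -- extra vs MRD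
      have h1 := finrank_inf_le_of_gamma (hMGam _ ⟨B, hB, rfl⟩) (hUGam p hp)
      rw [hUfin p hp] at h1
      omega
    · -- both extra
      have hpp : p ≠ p' := by
        intro h
        exact hne (by rw [h])
      exact hUinf p hp p' hp' hpp
  -- injectivity of the parametrisations
  have hGinj : Function.Injective
      (fun A : Matrix (Fin (3 * l)) (Fin (6 * l - 3 * l)) K =>
        Submodule.span K (Set.range (liftRow (v := 6 * l) A))) := by
    intro A B h
    simp only [hMG] at h
    exact gmap_range_inj hkv A B h
  have hUextInj : Set.InjOn Uext (Pts E) := by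
    intro p hp p' hp' h
    by_contra hne
    have h1 := hUinf p hp p' hp' hne
    rw [h, inf_idem] at h1
    rw [hUfin p' hp'] at h1
    omega
  -- disjointness of the two parts
  have hdisj : Disjoint Mset Ext := by
    rw [Set.disjoint_left]
    rintro U hU ⟨p, hp, rfl⟩
    have h1 := hMGam _ hU
    have h2 := hUGam p hp
    rw [h1] at h2
    rw [finrank_bot] at h2
    omega
  -- cardinalities
  have hMsetIm : Mset = (fun A : Matrix (Fin (3 * l)) (Fin (6 * l - 3 * l)) K =>
      Submodule.span K (Set.range (liftRow (v := 6 * l) A))) '' R := by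
    ext U
    simp only [hMdef, Set.mem_setOf_eq, Set.mem_image]
    exact exists_congr fun A => and_congr_right fun _ => eq_comm
  have hMcard : Mset.ncard = q ^ (3 * l * (l + 1)) := by
    rw [hMsetIm, Set.ncard_image_of_injective _ hGinj, hRdef, ← Set.image_univ,
      Set.ncard_image_of_injective _ hTinj, Set.ncard_univ, Nat.card_eq_fintype_card,
      Fintype.card_fun, hcardL, Fintype.card_fin, ← pow_mul]
  have hEcard : Ext.ncard = q ^ (2 * l) + q ^ l + 1 := by
    rw [hExtdef, Set.ncard_image_of_injOn hUextInj, pts_ncard, hcardE, ← pow_mul]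
    ring_nf
  -- final verification
  refine ⟨C, Mset, ⟨?_, ?_⟩, ⟨R, ?_, ?_, rfl⟩, ?_, ?_⟩
  · intro U hU
    rw [hdim U hU]
  · intro U hU W hW hne
    have h1 := sDist_ge U W (hdim U hU) (hdim W hW) (hinf U hU W hW hne) (by omega)
    have h2 : (4 * l : ℕ) ≤ sDist U W := by omega
    exact_mod_cast h2
  · have he1 : 6 * l - 3 * l = 3 * l := by omega
    have he2 : 3 * l - 4 * l / 2 + 1 = l + 1 := by omega
    have hexp : (6 * l - 3 * l) * (3 * l - 4 * l / 2 + 1) = 3 * l * (l + 1) := by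
      rw [he1, he2]
    rw [hexp, hRdef, ← Set.image_univ, Set.ncard_image_of_injective _ hTinj,
      Set.ncard_univ, Nat.card_eq_fintype_card, Fintype.card_fun, hcardL,
      Fintype.card_fin, ← pow_mul]
  · intro A hA B hB hne
    obtain ⟨c, rfl⟩ := hA
    obtain ⟨c', rfl⟩ := hB
    have hcc : c ≠ c' := fun h => hne (by rw [h])
    have := hTrank c c' hcc
    omega
  · exact Set.subset_union_left
  · have hMfin : Mset.Finite := by
      rw [hMsetIm]
      exact (Set.finite_range T).image _
    have hEfin : Ext.Finite := (Set.toFinite (Pts E)).image _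
    rw [hCdef, Set.ncard_union_eq hdisj hMfin hEfin, hMcard, hEcard]
    omega
end
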